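/- The linear image of a set-convex-relaxation commutes with linear maps preserving sharpness: if Z is a hybrid zonotope with CR(Z) = conv(Z), then for any matrix R and vector s, CR(R Z + s) = conv(R Z + s), i.e., the affine map preserves sharpness of hybrid zonotopes. -/
import Mathlib


open Matrix Set

/-- A hybrid zonotope `⟨Gc, Gb, c, Ac, Ab, b⟩` (canonical form). -/
def HZ {n nGc nGb nC : ℕ}
    (Gc : Matrix (Fin n) (Fin nGc) ℝ) (Gb : Matrix (Fin n) (Fin nGb) ℝ) (c : Fin n → ℝ)
    (Ac : Matrix (Fin nC) (Fin nGc) ℝ) (Ab : Matrix (Fin nC) (Fin nGb) ℝ) (b : Fin nC → ℝ) :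
    Set (Fin n → ℝ) :=
  {z | ∃ ξc : Fin nGc → ℝ, ∃ ξb : Fin nGb → ℝ,
    (∀ i, ξc i ∈ Set.Icc (-1:ℝ) 1) ∧ (∀ i, ξb i = -1 ∨ ξb i = 1) ∧
    Ac.mulVec ξc + Ab.mulVec ξb = b ∧ z = Gc.mulVec ξc + Gb.mulVec ξb + c}

/-- The convex relaxation of a hybrid zonotope. -/
def CRset {n nGc nGb nC : ℕ}
    (Gc : Matrix (Fin n) (Fin nGc) ℝ) (Gb : Matrix (Fin n) (Fin nGb) ℝ) (c : Fin n → ℝ)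
    (Ac : Matrix (Fin nC) (Fin nGc) ℝ) (Ab : Matrix (Fin nC) (Fin nGb) ℝ) (b : Fin nC → ℝ) :
    Set (Fin n → ℝ) :=
  {z | ∃ ξc : Fin nGc → ℝ, ∃ ξb : Fin nGb → ℝ,
    (∀ i, ξc i ∈ Set.Icc (-1:ℝ) 1) ∧ (∀ i, ξb i ∈ Set.Icc (-1:ℝ) 1) ∧
    Ac.mulVec ξc + Ab.mulVec ξb = b ∧ z = Gc.mulVec ξc + Gb.mulVec ξb + c}

lemma crset_image {n m nGc nGb nC : ℕ}
    (Gc : Matrix (Fin n) (Fin nGc) ℝ) (Gb : Matrix (Fin n) (Fin nGb) ℝ) (c : Fin n → ℝ)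
    (Ac : Matrix (Fin nC) (Fin nGc) ℝ) (Ab : Matrix (Fin nC) (Fin nGb) ℝ) (b : Fin nC → ℝ)
    (R : Matrix (Fin m) (Fin n) ℝ) (s : Fin m → ℝ) :
    {z | ∃ ξc : Fin nGc → ℝ, ∃ ξb : Fin nGb → ℝ,
      (∀ i, ξc i ∈ Set.Icc (-1:ℝ) 1) ∧ (∀ i, ξb i ∈ Set.Icc (-1:ℝ) 1) ∧
      Ac.mulVec ξc + Ab.mulVec ξb = b ∧
      z = (R*Gc).mulVec ξc + (R*Gb).mulVec ξb + (R.mulVec c + s)}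
      = (fun z => R.mulVec z + s) ''
        {z | ∃ ξc : Fin nGc → ℝ, ∃ ξb : Fin nGb → ℝ,
          (∀ i, ξc i ∈ Set.Icc (-1:ℝ) 1) ∧ (∀ i, ξb i ∈ Set.Icc (-1:ℝ) 1) ∧
          Ac.mulVec ξc + Ab.mulVec ξb = b ∧ z = Gc.mulVec ξc + Gb.mulVec ξb + c} := by
  ext z
  constructor
  · rintro ⟨ξc, ξb, h1, h2, h3, rfl⟩
    exact ⟨_, ⟨ξc, ξb, h1, h2, h3, rfl⟩, by
      simp [Matrix.mulVec_add, Matrix.mulVec_mulVec, add_assoc]⟩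
  · rintro ⟨w, ⟨ξc, ξb, h1, h2, h3, rfl⟩, rfl⟩
    exact ⟨ξc, ξb, h1, h2, h3, by
      simp [Matrix.mulVec_add, Matrix.mulVec_mulVec, add_assoc]⟩

/-- Affine maps preserve sharpness of hybrid zonotopes: if `CR(Z) = conv(Z)` then the hybrid
zonotope `R Z + s = ⟨R Gc, R Gb, R c + s, Ac, Ab, b⟩` satisfies
`CR(R Z + s) = conv(R Z + s)`. -/
theorem hz_affine_map_preserves_sharpness {n m nGc nGb nC : ℕ}
    (Gc : Matrix (Fin n) (Fin nGc) ℝ) (Gb : Matrix (Fin n) (Fin nGb) ℝ) (c : Fin n → ℝ)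
    (Ac : Matrix (Fin nC) (Fin nGc) ℝ) (Ab : Matrix (Fin nC) (Fin nGb) ℝ) (b : Fin nC → ℝ)
    (R : Matrix (Fin m) (Fin n) ℝ) (s : Fin m → ℝ)
    (hsharp : CRset Gc Gb c Ac Ab b = convexHull ℝ (HZ Gc Gb c Ac Ab b)) :
    CRset (R * Gc) (R * Gb) (R.mulVec c + s) Ac Ab b
      = convexHull ℝ ((fun z => R.mulVec z + s) '' HZ Gc Gb c Ac Ab b) := by
  have hf : (fun z : Fin n → ℝ => R.mulVec z + s)
      = (⟨fun z => R.mulVec z + s, R.mulVecLin, fun p v => by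
          simp [Matrix.mulVec_add]; module⟩ : (Fin n → ℝ) →ᵃ[ℝ] (Fin m → ℝ)) := rfl
  have h1 : CRset (R * Gc) (R * Gb) (R.mulVec c + s) Ac Ab b
      = (fun z => R.mulVec z + s) '' CRset Gc Gb c Ac Ab b :=
    crset_image Gc Gb c Ac Ab b R s
  rw [h1, hsharp, hf]
  exact AffineMap.image_convexHull
    (⟨fun z => R.mulVec z + s, R.mulVecLin, fun p v => by
        simp [Matrix.mulVec_add]; module⟩ : (Fin n → ℝ) →ᵃ[ℝ] (Fin m → ℝ))
    (HZ Gc Gb c Ac Ab b)
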